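/- Let ℓ > 0, φₖ(z) = (√(2ℓ)/(kπ)) sin(kπz/ℓ) for k ≥ 1, φ₋₁(z) = 1/√2, and φ₀(z) = (z/ℓ - 1/2)/√(1/ℓ + 1/2). Then {φ₋₁, φ₀, φ₁, φ₂, …} is an orthonormal system with respect to the inner product ⟨h₁,h₂⟩_X = h₁(0)h₂(0) + h₁(ℓ)h₂(ℓ) + ∫₀^ℓ h₁'(z) h₂'(z) dz. -/

import Mathlib

open Real intervalIntegral

/-- The modified `H¹(0,ℓ)`-inner product
`⟨h₁,h₂⟩_X = h₁(0)h₂(0) + h₁(ℓ)h₂(ℓ) + ∫₀^ℓ h₁' h₂'`. -/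
noncomputable def innerX (ℓ : ℝ) (h₁ h₂ : ℝ → ℝ) : ℝ :=
  h₁ 0 * h₂ 0 + h₁ ℓ * h₂ ℓ + ∫ z in (0:ℝ)..ℓ, deriv h₁ z * deriv h₂ z

/-- The basis functions `φ₋₁(z) = 1/√2`,
`φ₀(z) = (z/ℓ - 1/2)/√(1/ℓ + 1/2)`, and
`φₖ(z) = (√(2ℓ)/(kπ)) sin(kπz/ℓ)` for `k ≥ 1`. -/
noncomputable def phi (ℓ : ℝ) : ℤ → ℝ → ℝ
  | -1 => fun _ => 1 / Real.sqrt 2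
  | 0 => fun z => (z / ℓ - 1 / 2) / Real.sqrt (1 / ℓ + 1 / 2)
  | (k : ℕ) => fun z => Real.sqrt (2 * ℓ) / (k * π) * Real.sin (k * π * z / ℓ)
  | _ => fun _ => 0

/-!
For `k ≥ 1`, `φₖ` vanishes at both ends, so only the Dirichlet part of `⟨·,·⟩_X` survives and
`φₖ' = (√(2ℓ)/ℓ) cos(kπz/ℓ)`; pairings among the `φₖ` and with `φ₀` (whose derivative is
constant) reduce to `∫₀^ℓ cos(nπz/ℓ) dz = 0` for integers `n ≠ 0`, via product-to-sum.
The constant `φ₋₁` only sees boundary values, and `φ₀` is odd about `ℓ/2` with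
`φ₀(0)² + φ₀(ℓ)² + ℓ φ₀'² = (1/2 + 1/ℓ)/(1/ℓ + 1/2) = 1`.
-/

section InnerX

variable (ℓ : ℝ)

theorem innerX_comm (f g : ℝ → ℝ) : innerX ℓ f g = innerX ℓ g f := by
  simp only [innerX, mul_comm (f _), mul_comm (deriv f _)]

theorem innerX_const_left (c : ℝ) (g : ℝ → ℝ) :
    innerX ℓ (fun _ => c) g = c * (g 0 + g ℓ) := by
  simp only [innerX, deriv_const', zero_mul, integral_zero]
  ring

theorem innerX_eq_integral_of_left_eq_zero {f : ℝ → ℝ} (hf₀ : f 0 = 0) (hfℓ : f ℓ = 0)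
    (g : ℝ → ℝ) : innerX ℓ f g = ∫ z in (0:ℝ)..ℓ, deriv f z * deriv g z := by
  simp only [innerX, hf₀, hfℓ, zero_mul, zero_add]

end InnerX

section CosineIntegrals

variable {ℓ : ℝ}

theorem integral_cos_int_mul_pi_div (hℓ : ℓ ≠ 0) (n : ℤ) :
    ∫ z in (0:ℝ)..ℓ, cos (n * π * z / ℓ) = if n = 0 then ℓ else 0 := by
  split_ifs with hn
  · simp [hn]
  have hnπ : (n : ℝ) * π ≠ 0 := mul_ne_zero (Int.cast_ne_zero.mpr hn) pi_ne_zero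
  have hF : ∀ z, HasDerivAt (fun z => ℓ / (n * π) * sin (n * π * z / ℓ))
      (cos (n * π * z / ℓ)) z := by
    intro z
    refine ((((hasDerivAt_id' z).const_mul ((n : ℝ) * π)).div_const ℓ).sin.const_mul
      (ℓ / (n * π))).congr_deriv ?_
    field_simp
  rw [integral_eq_sub_of_hasDerivAt (fun z _ => hF z)
    ((by fun_prop : Continuous fun z => cos (n * π * z / ℓ)).intervalIntegrable _ _)]
  simp [mul_div_cancel_right₀ _ hℓ, sin_int_mul_pi]

theorem integral_cos_mul_cos_int_mul_pi_div (hℓ : ℓ ≠ 0) (k m : ℤ) :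
    ∫ z in (0:ℝ)..ℓ, cos (k * π * z / ℓ) * cos (m * π * z / ℓ)
      = ((if k = m then ℓ else 0) + if k + m = 0 then ℓ else 0) / 2 := by
  have hprod : ∀ z : ℝ, cos (k * π * z / ℓ) * cos (m * π * z / ℓ)
      = (cos (((k - m : ℤ) : ℝ) * π * z / ℓ) + cos (((k + m : ℤ) : ℝ) * π * z / ℓ)) / 2 := by
    intro z
    rw [eq_div_iff two_ne_zero, mul_comm, ← mul_assoc, two_mul_cos_mul_cos]
    push_cast
    ring_nf
  simp_rw [hprod]
  rw [integral_div, integral_add ((by fun_prop : Continuous _).intervalIntegrable _ _)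
    ((by fun_prop : Continuous _).intervalIntegrable _ _),
    integral_cos_int_mul_pi_div hℓ, integral_cos_int_mul_pi_div hℓ]
  simp only [sub_eq_zero]

end CosineIntegrals

section Phi

variable {ℓ : ℝ}

theorem phi_natCast {k : ℕ} (hk : k ≠ 0) :
    phi ℓ k = fun z => √(2 * ℓ) / (k * π) * sin (k * π * z / ℓ) := by
  obtain ⟨n, rfl⟩ := Nat.exists_eq_succ_of_ne_zero hk
  rfl

theorem phi_natCast_apply_zero {k : ℕ} (hk : k ≠ 0) : phi ℓ k 0 = 0 := by
  simp [phi_natCast hk]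

theorem phi_natCast_apply_self (hℓ : ℓ ≠ 0) {k : ℕ} (hk : k ≠ 0) : phi ℓ k ℓ = 0 := by
  simp [phi_natCast hk, mul_div_cancel_right₀ _ hℓ, sin_nat_mul_pi]

theorem deriv_phi_zero (z : ℝ) : deriv (phi ℓ 0) z = 1 / ℓ / √(1 / ℓ + 1 / 2) := by
  have := (((hasDerivAt_id' z).div_const ℓ).sub_const (1 / 2)).div_const √(1 / ℓ + 1 / 2)
  exact this.deriv

theorem deriv_phi_natCast (hℓ : ℓ ≠ 0) {k : ℕ} (hk : k ≠ 0) (z : ℝ) :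
    deriv (phi ℓ k) z = √(2 * ℓ) / ℓ * cos (k * π * z / ℓ) := by
  have hkπ : (k : ℝ) * π ≠ 0 := mul_ne_zero (Nat.cast_ne_zero.mpr hk) pi_ne_zero
  rw [phi_natCast hk]
  have := (((hasDerivAt_id' z).const_mul ((k : ℝ) * π)).div_const ℓ).sin.const_mul
    (√(2 * ℓ) / (k * π))
  rw [this.deriv]
  field_simp

end Phi

theorem Int.eq_neg_one_or_eq_zero_or_eq_natCast {i : ℤ} (hi : -1 ≤ i) :
    i = -1 ∨ i = 0 ∨ ∃ k : ℕ, k ≠ 0 ∧ i = k := by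
  rcases lt_or_ge i 1 with h | h
  · omega
  · exact Or.inr (Or.inr ⟨i.toNat, by omega, by omega⟩)

section InnerXPhi

variable {ℓ : ℝ}

theorem innerX_phi_neg_one_left (g : ℝ → ℝ) :
    innerX ℓ (phi ℓ (-1)) g = 1 / √2 * (g 0 + g ℓ) :=
  innerX_const_left ℓ _ g

theorem innerX_phi_neg_one_self : innerX ℓ (phi ℓ (-1)) (phi ℓ (-1)) = 1 := by
  rw [innerX_phi_neg_one_left]
  show 1 / √2 * (1 / √2 + 1 / √2) = 1
  field_simp
  rw [sq_sqrt zero_le_two]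
  norm_num

theorem innerX_phi_neg_one_zero (hℓ : ℓ ≠ 0) : innerX ℓ (phi ℓ (-1)) (phi ℓ 0) = 0 := by
  rw [innerX_phi_neg_one_left]
  show 1 / √2 * ((0 / ℓ - 1 / 2) / √(1 / ℓ + 1 / 2) + (ℓ / ℓ - 1 / 2) / √(1 / ℓ + 1 / 2)) = 0
  rw [div_self hℓ]
  ring

theorem innerX_phi_neg_one_natCast (hℓ : ℓ ≠ 0) {k : ℕ} (hk : k ≠ 0) :
    innerX ℓ (phi ℓ (-1)) (phi ℓ k) = 0 := by
  rw [innerX_phi_neg_one_left, phi_natCast_apply_zero hk, phi_natCast_apply_self hℓ hk]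
  ring

theorem innerX_phi_zero_self (hℓ : 0 < ℓ) : innerX ℓ (phi ℓ 0) (phi ℓ 0) = 1 := by
  set s := √(1 / ℓ + 1 / 2)
  have hs : s ^ 2 = 1 / ℓ + 1 / 2 := sq_sqrt (by positivity)
  simp only [innerX, deriv_phi_zero, integral_const, smul_eq_mul]
  show (0 / ℓ - 1 / 2) / s * ((0 / ℓ - 1 / 2) / s) + (ℓ / ℓ - 1 / 2) / s * ((ℓ / ℓ - 1 / 2) / s)
      + (ℓ - 0) * (1 / ℓ / s * (1 / ℓ / s)) = 1
  calc _ = (1 / ℓ + 1 / 2) / s ^ 2 := by field_simp; ring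
    _ = 1 := by rw [hs, div_self (by positivity)]

theorem innerX_phi_zero_natCast (hℓ : ℓ ≠ 0) {k : ℕ} (hk : k ≠ 0) :
    innerX ℓ (phi ℓ 0) (phi ℓ k) = 0 := by
  have hcos := integral_cos_int_mul_pi_div hℓ k
  push_cast at hcos
  rw [innerX_comm, innerX_eq_integral_of_left_eq_zero ℓ (phi_natCast_apply_zero hk)
    (phi_natCast_apply_self hℓ hk)]
  simp only [deriv_phi_natCast hℓ hk, deriv_phi_zero, mul_right_comm _ (cos _),
    integral_const_mul, hcos, Nat.cast_eq_zero, hk, if_false]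
  ring

theorem innerX_phi_natCast_natCast (hℓ : 0 < ℓ) {k m : ℕ} (hk : k ≠ 0) (hm : m ≠ 0) :
    innerX ℓ (phi ℓ k) (phi ℓ m) = if k = m then 1 else 0 := by
  have hcos := integral_cos_mul_cos_int_mul_pi_div hℓ.ne' k m
  have hkm : (k : ℤ) + m ≠ 0 := by omega
  simp only [hkm, if_false, add_zero, Int.cast_natCast, Nat.cast_inj] at hcos
  rw [innerX_eq_integral_of_left_eq_zero ℓ (phi_natCast_apply_zero hk)
    (phi_natCast_apply_self hℓ.ne' hk)]
  simp only [deriv_phi_natCast hℓ.ne' hk, deriv_phi_natCast hℓ.ne' hm,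
    mul_mul_mul_comm (√(2 * ℓ) / ℓ) (cos _), integral_const_mul, hcos]
  split_ifs
  · rw [div_mul_div_comm, mul_self_sqrt (by positivity)]
    field_simp
  · simp

end InnerXPhi

/-- `{φ₋₁, φ₀, φ₁, φ₂, …}` is an orthonormal system with respect to the
modified inner product `⟨·,·⟩_X`. -/
theorem phi_orthonormal (ℓ : ℝ) (hℓ : 0 < ℓ) :
    ∀ i j : ℤ, -1 ≤ i → -1 ≤ j →
      innerX ℓ (phi ℓ i) (phi ℓ j) = if i = j then 1 else 0 := by
  intro i j hi hj
  wlog hij : i ≤ j generalizing i j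
  · rw [innerX_comm, this j i hj hi (by omega)]
    exact if_congr eq_comm rfl rfl
  obtain rfl | rfl | ⟨k, hk, rfl⟩ := Int.eq_neg_one_or_eq_zero_or_eq_natCast hi <;>
    obtain rfl | rfl | ⟨m, hm, rfl⟩ := Int.eq_neg_one_or_eq_zero_or_eq_natCast hj <;>
    try omega
  · rw [innerX_phi_neg_one_self, if_pos rfl]
  · rw [innerX_phi_neg_one_zero hℓ.ne', if_neg (by decide)]
  · rw [innerX_phi_neg_one_natCast hℓ.ne' hm, if_neg (by omega)]
  · rw [innerX_phi_zero_self hℓ, if_pos rfl]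
  · rw [innerX_phi_zero_natCast hℓ.ne' hm, if_neg (by omega)]
  · rw [innerX_phi_natCast_natCast hℓ hk hm]
    exact if_congr Int.natCast_inj.symm rfl rfl
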